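/- (Soundness of Chase Start for typed dependencies.) Let T be a finite typed relation over R (no value of T occurs in two distinct columns of T), let Ā list R, and let r be a non-empty relation over a finite attribute set R' ⊇ R with R' ∩ Val(T) = ∅. Then the relation r'' := r ⋈ q(r), where q(r) := ⋈_{t∈T} ρ_{t(Ā)/Ā}(r|_R) is the join of the copies of r|_R renamed along A ↦ t(A) for each t ∈ T, is an extension of r to R' ∪ Val(T) (r''|_{R'} = r) that satisfies ⋀_{t∈T} Ā ⊆ t(Ā) ∧ ⋈(t(Ā))_{t∈T} ∧ ⋀_{t∈T} t(Ā) ⊆ Ā. -/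

import Mathlib

namespace EmbeddedDependencies

noncomputable section
open Classical

/- Values and attributes coincide; we take them to be natural numbers
   (a countably infinite set, with its total well-founded order `<`). -/
abbrev Val := ℕ

/-- A tuple over an attribute set `R` is (canonically encoded as) a total function
    `Val → Val`; only its values on `R` matter. -/
abbrev Tuple := Val → Val

/-- A relation is a set of tuples. -/
abbrev Rel := Set Tuple

/-- Canonical restriction of a tuple to the attribute set `R` (default value `0` outside `R`). -/
def restrictT (R : Set Val) (t : Tuple) : Tuple := fun a => if a ∈ R then t a else 0

/-- Restriction `r|_R` of a relation `r` to the attribute set `R`. -/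
def restrictR (R : Set Val) (r : Rel) : Rel := (restrictT R) '' r

/-- `Val(T)`: the set of values occurring in the relation `T` over the attribute set `R`. -/
def valsOf (R : Set Val) (T : Rel) : Set Val := {v | ∃ t ∈ T, ∃ a ∈ R, t a = v}

/-- `f(T) ⊆ r|_R` for a valuation `f : Val → Val`. -/
def Embeds (R : Set Val) (f : Val → Val) (T r : Rel) : Prop :=
  ∀ t ∈ T, restrictT R (f ∘ t) ∈ restrictR R r

/-- Satisfaction of the egd `(T, x = y)` over `R` by the relation `r`:
    every valuation `f` with `f(T) ⊆ r|_R` satisfies `f x = f y`. -/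
def egdSat (R : Set Val) (T : Rel) (x y : Val) (r : Rel) : Prop :=
  ∀ f : Val → Val, Embeds R f T r → f x = f y

/-- Satisfaction of the tgd `(T, T')` over `R` by the relation `r`: every valuation `f`
    (on `Val(T)`) with `f(T) ⊆ r|_R` has an extension `g` to `Val(T')`, agreeing with `f`
    on `Val(T) ∩ Val(T')`, with `g(T') ⊆ r|_R`. -/
def tgdSat (R : Set Val) (T T' : Rel) (r : Rel) : Prop :=
  ∀ f : Val → Val, Embeds R f T r →
    ∃ g : Val → Val, (∀ v ∈ valsOf R T ∩ valsOf R T', g v = f v) ∧ Embeds R g T' r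

/-- Satisfaction of the inclusion dependency `A_1 … A_n ⊆ B_1 … B_n` by the relation `r`. -/
def indSat (A B : List Val) (r : Rel) : Prop :=
  ∀ s ∈ r, ∃ s' ∈ r, A.map s = B.map s'

/-- `A` is a sequence listing the attribute set `R`. -/
def ListsR (A : List Val) (R : Set Val) : Prop := A.Nodup ∧ ∀ a, a ∈ A ↔ a ∈ R

/-- Satisfaction of an embedded join dependency, given by the family `Rs` of attribute
sets of its components: `r|_{⋃Rs}` equals the natural join of the `r|_{R_i}`. -/
def ejdSat (Rs : Set (Set Val)) (r : Rel) : Prop :=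
  restrictR (⋃₀ Rs) r =
    restrictR (⋃₀ Rs) {u : Tuple | ∀ Ri ∈ Rs, restrictT Ri u ∈ restrictR Ri r}

/-! The chase adds, for every `s ∈ r`, the tuple that copies `s` onto every renamed column
`t(A)`; typedness makes this copy well defined, since each value of `Val(T)` lies in a single
column `A`. Joining with `r` along disjoint attribute sets neither loses nor adds `R'`-parts,
and every tuple of the chase carries, on each `t(R)`, the `R`-part of some tuple of `r`:
these two facts give the inclusion dependencies in both directions and the join dependency. -/

section Restrict

variable {S : Set Val}

theorem restrictT_apply_of_mem {x : Val} (hx : x ∈ S) (t : Tuple) : restrictT S t x = t x :=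
  if_pos hx

theorem restrictT_apply_of_notMem {x : Val} (hx : x ∉ S) (t : Tuple) : restrictT S t x = 0 :=
  if_neg hx

theorem restrictT_restrictT (t : Tuple) : restrictT S (restrictT S t) = restrictT S t := by
  funext x
  by_cases hx : x ∈ S <;> simp [restrictT, hx]

theorem restrictT_eq_self_of_mem_restrictR {r : Rel} {t : Tuple} (ht : t ∈ restrictR S r) :
    restrictT S t = t := by
  obtain ⟨t, -, rfl⟩ := ht
  exact restrictT_restrictT t

theorem restrictR_restrictR (r : Rel) : restrictR S (restrictR S r) = restrictR S r := by
  simp only [restrictR, Set.image_image, restrictT_restrictT]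

theorem eqOn_restrictT (t : Tuple) : Set.EqOn (restrictT S t) t S :=
  fun _ hx => restrictT_apply_of_mem hx t

theorem ejdSat_iff {Rs : Set (Set Val)} {r : Rel} :
    ejdSat Rs r ↔ ∀ u : Tuple, (∀ Ri ∈ Rs, restrictT Ri u ∈ restrictR Ri r) →
      restrictT (⋃₀ Rs) u ∈ restrictR (⋃₀ Rs) r := by
  refine ⟨fun h u hu => h ▸ ⟨u, hu, rfl⟩, fun h => ?_⟩
  refine Set.Subset.antisymm ?_ ?_
  · rintro _ ⟨w, hw, rfl⟩
    exact ⟨w, fun Ri _ => ⟨w, hw, rfl⟩, rfl⟩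
  · rintro _ ⟨u, hu, rfl⟩
    exact h u hu

end Restrict

/-- `r ⋈ q` for `r` over `S` and `q` over `S'`. -/
def natJoin (S S' : Set Val) (r q : Rel) : Rel :=
  {w | restrictT (S ∪ S') w = w ∧ restrictT S w ∈ r ∧ restrictT S' w ∈ q}

section NatJoin

variable {S S' : Set Val} {r q : Rel}

theorem restrictT_mem_of_mem_natJoin {w : Tuple} (hw : w ∈ natJoin S S' r q) :
    restrictT S w ∈ r :=
  hw.2.1

theorem exists_mem_natJoin (hSS' : Disjoint S S') {s u : Tuple} (hs : s ∈ r)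
    (hsS : restrictT S s = s) (hu : u ∈ q) (huS' : restrictT S' u = u) :
    ∃ w ∈ natJoin S S' r q, restrictT S w = s ∧ restrictT S' w = u := by
  set w : Tuple := fun x => if x ∈ S then s x else u x
  have hwS : restrictT S w = s := by
    rw [← hsS]
    funext x
    by_cases hx : x ∈ S <;> simp [w, restrictT, hx]
  have hwS' : restrictT S' w = u := by
    rw [← huS']
    funext x
    by_cases hx : x ∈ S' <;> simp [w, restrictT, hx, Set.disjoint_right.1 hSS']
  refine ⟨w, ⟨?_, hwS ▸ hs, hwS' ▸ hu⟩, hwS, hwS'⟩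
  funext x
  by_cases hx : x ∈ S ∪ S'
  · exact restrictT_apply_of_mem hx w
  · obtain ⟨hxS, hxS'⟩ := not_or.1 hx
    rw [restrictT_apply_of_notMem hx, show w x = u x from if_neg hxS, ← huS',
      restrictT_apply_of_notMem hxS']

theorem restrictR_natJoin (hSS' : Disjoint S S') (hr : restrictR S r = r)
    (hq : restrictR S' q = q) (hqne : q.Nonempty) : restrictR S (natJoin S S' r q) = r := by
  obtain ⟨u, hu⟩ := hqne
  refine Set.Subset.antisymm ?_ fun s hs => ?_
  · rintro _ ⟨w, hw, rfl⟩
    exact restrictT_mem_of_mem_natJoin hw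
  · obtain ⟨w, hw, hws, -⟩ := exists_mem_natJoin hSS' hs
      (restrictT_eq_self_of_mem_restrictR (hr.symm ▸ hs)) hu
      (restrictT_eq_self_of_mem_restrictR (hq.symm ▸ hu))
    exact ⟨w, hw, hws⟩

end NatJoin

section Typed

variable {R : Set Val} {T r : Rel}

def IsTyped (R : Set Val) (T : Rel) : Prop :=
  ∀ t ∈ T, ∀ t' ∈ T, ∀ a ∈ R, ∀ b ∈ R, t a = t' b → a = b

/-- The column of `R` in which a value of `Val(T)` occurs (junk for other values). -/
def column (R : Set Val) (T : Rel) (v : Val) : Val :=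
  Classical.epsilon fun a => a ∈ R ∧ ∃ t ∈ T, t a = v

theorem column_apply (hT : IsTyped R T) {t : Tuple} (ht : t ∈ T) {a : Val} (ha : a ∈ R) :
    column R T (t a) = a := by
  obtain ⟨hb, t', ht', hb'⟩ :=
    Classical.epsilon_spec (p := fun b => b ∈ R ∧ ∃ t' ∈ T, t' b = t a) ⟨a, ha, t, ht, rfl⟩
  exact hT t' ht' t ht _ hb a ha hb'

/-- `⋈_{t ∈ T} ρ_{t(Ā)/Ā}(r|_R)`, before restriction to `Val(T)`. -/
def renamedJoin (R : Set Val) (T r : Rel) : Rel :=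
  {u | ∀ t ∈ T, ∃ s ∈ r, ∀ a ∈ R, u (t a) = s a}

theorem comp_column_mem_renamedJoin (hT : IsTyped R T) {s : Tuple} (hs : s ∈ r) :
    s ∘ column R T ∈ renamedJoin R T r :=
  fun _ ht => ⟨s, hs, fun _ ha => congrArg s (column_apply hT ht ha)⟩

theorem mem_renamedJoin_of_eqOn {u u' : Tuple} (huu' : Set.EqOn u u' (valsOf R T))
    (hu : u ∈ renamedJoin R T r) : u' ∈ renamedJoin R T r := by
  intro t ht
  obtain ⟨s, hs, hus⟩ := hu t ht
  exact ⟨s, hs, fun a ha => (huu' ⟨t, ht, a, ha, rfl⟩).symm.trans (hus a ha)⟩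

theorem mem_renamedJoin_of_restrictT_mem {u : Tuple}
    (hu : restrictT (valsOf R T) u ∈ restrictR (valsOf R T) (renamedJoin R T r)) :
    u ∈ renamedJoin R T r := by
  obtain ⟨u₀, hu₀, hu₀u⟩ := hu
  refine mem_renamedJoin_of_eqOn (fun v hv => ?_) hu₀
  rw [← eqOn_restrictT u₀ hv, hu₀u, eqOn_restrictT u hv]

end Typed

/-- The result `r ⋈ q(r)` of the chase start on `r` for the typed tableau `T`. -/
def chase (R : Set Val) (T : Rel) (R' : Set Val) (r : Rel) : Rel :=
  natJoin R' (valsOf R T) r (restrictR (valsOf R T) (renamedJoin R T r))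

section Chase

variable {R : Set Val} {T : Rel} {R' : Set Val} {r : Rel}

theorem mem_renamedJoin_of_mem_chase {w : Tuple} (hw : w ∈ chase R T R' r) :
    w ∈ renamedJoin R T r :=
  mem_renamedJoin_of_restrictT_mem hw.2.2

theorem exists_mem_chase_extending (hT : IsTyped R T) (hdisj : Disjoint R' (valsOf R T))
    (hr : restrictR R' r = r) {s : Tuple} (hs : s ∈ r) :
    ∃ w ∈ chase R T R' r, restrictT R' w = s ∧ ∀ t ∈ T, ∀ a ∈ R, w (t a) = s a := by
  obtain ⟨w, hw, hws, hwu⟩ := exists_mem_natJoin (u := restrictT _ (s ∘ column R T)) hdisj hs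
    (restrictT_eq_self_of_mem_restrictR (hr.symm ▸ hs))
    (Set.mem_image_of_mem _ (comp_column_mem_renamedJoin hT hs)) (restrictT_restrictT _)
  refine ⟨w, hw, hws, fun t ht a ha => ?_⟩
  have hta : t a ∈ valsOf R T := ⟨t, ht, a, ha, rfl⟩
  rw [← eqOn_restrictT w hta, hwu, eqOn_restrictT _ hta, Function.comp_apply,
    column_apply hT ht ha]

theorem restrictR_chase (hT : IsTyped R T) (hdisj : Disjoint R' (valsOf R T))
    (hr : restrictR R' r = r) (hne : r.Nonempty) : restrictR R' (chase R T R' r) = r := by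
  obtain ⟨s, hs⟩ := hne
  exact restrictR_natJoin hdisj hr (restrictR_restrictR _)
    ⟨_, Set.mem_image_of_mem _ (comp_column_mem_renamedJoin hT hs)⟩

theorem indSat_chase_attrs_renamed (hT : IsTyped R T) (hdisj : Disjoint R' (valsOf R T))
    (hr : restrictR R' r = r) (hRR' : R ⊆ R') {A : List Val} (hAR : ∀ a ∈ A, a ∈ R)
    {t : Tuple} (ht : t ∈ T) : indSat A (A.map t) (chase R T R' r) := by
  intro w hw
  obtain ⟨w', hw', -, hw't⟩ :=
    exists_mem_chase_extending hT hdisj hr (restrictT_mem_of_mem_natJoin hw)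
  refine ⟨w', hw', ?_⟩
  rw [List.map_map]
  refine List.map_congr_left fun a ha => ?_
  rw [Function.comp_apply, hw't t ht a (hAR a ha),
    restrictT_apply_of_mem (hRR' (hAR a ha))]

theorem indSat_chase_renamed_attrs (hT : IsTyped R T) (hdisj : Disjoint R' (valsOf R T))
    (hr : restrictR R' r = r) (hRR' : R ⊆ R') {A : List Val} (hAR : ∀ a ∈ A, a ∈ R)
    {t : Tuple} (ht : t ∈ T) : indSat (A.map t) A (chase R T R' r) := by
  intro w hw
  obtain ⟨s, hs, hws⟩ := mem_renamedJoin_of_mem_chase hw t ht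
  obtain ⟨w', hw', hw's, -⟩ := exists_mem_chase_extending hT hdisj hr hs
  refine ⟨w', hw', ?_⟩
  rw [List.map_map]
  refine List.map_congr_left fun a ha => ?_
  rw [Function.comp_apply, hws a (hAR a ha), ← hw's,
    restrictT_apply_of_mem (hRR' (hAR a ha))]

theorem sUnion_columns_eq_valsOf :
    ⋃₀ {Ri | ∃ t ∈ T, Ri = {v | ∃ a ∈ R, t a = v}} = valsOf R T := by
  ext v
  constructor
  · rintro ⟨_, ⟨t, ht, rfl⟩, a, ha, rfl⟩
    exact ⟨t, ht, a, ha, rfl⟩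
  · rintro ⟨t, ht, a, ha, rfl⟩
    exact ⟨_, ⟨t, ht, rfl⟩, a, ha, rfl⟩

theorem ejdSat_chase (hdisj : Disjoint R' (valsOf R T)) (hr : restrictR R' r = r)
    (hne : r.Nonempty) :
    ejdSat {Ri | ∃ t ∈ T, Ri = {v | ∃ a ∈ R, t a = v}} (chase R T R' r) := by
  rw [ejdSat_iff, sUnion_columns_eq_valsOf]
  intro u hu
  have hu_mem : u ∈ renamedJoin R T r := by
    intro t ht
    obtain ⟨w, hw, hwu⟩ := hu _ ⟨t, ht, rfl⟩
    obtain ⟨s, hs, hws⟩ := mem_renamedJoin_of_mem_chase hw t ht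
    refine ⟨s, hs, fun a ha => ?_⟩
    have hta : t a ∈ {v | ∃ a ∈ R, t a = v} := ⟨a, ha, rfl⟩
    rw [← eqOn_restrictT u hta, ← hwu, eqOn_restrictT w hta, hws a ha]
  obtain ⟨s, hs⟩ := hne
  obtain ⟨w, hw, -, hwu⟩ := exists_mem_natJoin (u := restrictT _ u) hdisj hs
    (restrictT_eq_self_of_mem_restrictR (hr.symm ▸ hs)) (Set.mem_image_of_mem _ hu_mem) (restrictT_restrictT u)
  exact ⟨w, hw, hwu⟩

end Chase

theorem chase_start_typed_sound_general
    (R : Set Val) (A : List Val) (hA : ListsR A R)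
    (T : Rel)
    (htyped : ∀ t ∈ T, ∀ t' ∈ T, ∀ a ∈ R, ∀ b ∈ R, t a = t' b → a = b)
    (R' : Set Val) (hRR' : R ⊆ R')
    (hdisj : R' ∩ valsOf R T = ∅)
    (r : Rel) (hne : r.Nonempty) (hr : restrictR R' r = r)
    -- `q(r)`: the join over `t ∈ T` of the renamed copies `ρ_{t(Ā)/Ā}(r|_R)`
    (qr : Rel)
    (hqr : qr = restrictR (valsOf R T)
      {u : Tuple | ∀ t ∈ T, ∃ s ∈ r, ∀ a ∈ R, u (t a) = s a})
    -- `r'' = r ⋈ q(r)`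
    (r'' : Rel)
    (hr'' : r'' = {w : Tuple | restrictT (R' ∪ valsOf R T) w = w ∧
      restrictT R' w ∈ r ∧ restrictT (valsOf R T) w ∈ qr}) :
    restrictR R' r'' = r ∧
    (∀ t ∈ T, indSat A (A.map t) r'') ∧
    ejdSat {Ri | ∃ t ∈ T, Ri = {v | ∃ a ∈ R, t a = v}} r'' ∧
    (∀ t ∈ T, indSat (A.map t) A r'') := by
  have hchase : r'' = chase R T R' r := by subst hqr; exact hr''
  have hdisj' : Disjoint R' (valsOf R T) := Set.disjoint_iff_inter_eq_empty.2 hdisj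
  have hAR : ∀ a ∈ A, a ∈ R := fun a => (hA.2 a).1
  subst hchase
  exact ⟨restrictR_chase htyped hdisj' hr hne,
    fun t ht => indSat_chase_attrs_renamed htyped hdisj' hr hRR' hAR ht,
    ejdSat_chase hdisj' hr hne,
    fun t ht => indSat_chase_renamed_attrs htyped hdisj' hr hRR' hAR ht⟩

/-- (Soundness of Chase Start for typed dependencies.) For a typed
finite relation `T` over `R` with new values, the extension `r ⋈ q(r)` of `r`, where
`q(r)` is the join of the copies of `r|_R` renamed along `A ↦ t(A)` for `t ∈ T`,
satisfies `⋀_{t∈T} Ā ⊆ t(Ā) ∧ ⋈(t(Ā))_{t∈T} ∧ ⋀_{t∈T} t(Ā) ⊆ Ā`. -/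
theorem chase_start_typed_sound
    (R : Set Val) (hR : R.Finite) (A : List Val) (hA : ListsR A R)
    (T : Rel) (hTfin : T.Finite) (hTc : restrictR R T = T)
    (htyped : ∀ t ∈ T, ∀ t' ∈ T, ∀ a ∈ R, ∀ b ∈ R, t a = t' b → a = b)
    (R' : Set Val) (hR' : R'.Finite) (hRR' : R ⊆ R')
    (hdisj : R' ∩ valsOf R T = ∅)
    (r : Rel) (hne : r.Nonempty) (hr : restrictR R' r = r)
    -- `q(r)`: the join over `t ∈ T` of the renamed copies `ρ_{t(Ā)/Ā}(r|_R)`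
    (qr : Rel)
    (hqr : qr = restrictR (valsOf R T)
      {u : Tuple | ∀ t ∈ T, ∃ s ∈ r, ∀ a ∈ R, u (t a) = s a})
    -- `r'' = r ⋈ q(r)`
    (r'' : Rel)
    (hr'' : r'' = {w : Tuple | restrictT (R' ∪ valsOf R T) w = w ∧
      restrictT R' w ∈ r ∧ restrictT (valsOf R T) w ∈ qr}) :
    restrictR R' r'' = r ∧
    (∀ t ∈ T, indSat A (A.map t) r'') ∧
    ejdSat {Ri | ∃ t ∈ T, Ri = {v | ∃ a ∈ R, t a = v}} r'' ∧
    (∀ t ∈ T, indSat (A.map t) A r'') :=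
  chase_start_typed_sound_general R A hA T htyped R' hRR' hdisj r hne hr qr hqr r'' hr''

end
end EmbeddedDependencies
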